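/- An unweighted graph contains an induced subgraph on at most k vertices with density at least (k−1)/2 if and only if it contains a clique on k vertices. (Hence the densest at-most-k-subgraph problem is NP-complete.) -/

import Mathlib

open Finset

/-- Density of the subgraph of a simple graph induced on `S`: each unordered
edge inside `S` is counted twice in the filter, hence the division by `2·|S|`. -/
noncomputable def udens {V : Type*} [Fintype V] [DecidableEq V] (G : SimpleGraph V)
    [DecidableRel G.Adj] (S : Finset V) : ℝ :=
  (((S ×ˢ S).filter fun p => G.Adj p.1 p.2).card : ℝ) / (2 * S.card)

lemma card_offDiag_div_two_mul_card {α : Type*} {S : Finset α}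
    (hS : S.Nonempty) :
    (#S.offDiag : ℝ) / (2 * #S) = ((#S : ℝ) - 1) / 2 := by
  rw [offDiag_card, Nat.cast_sub (Nat.le_mul_self _), Nat.cast_mul]
  field_simp

section Density

variable {V : Type*} (G : SimpleGraph V) [DecidableRel G.Adj]
  {S : Finset V}

lemma filter_adj_subset_offDiag : ((S ×ˢ S).filter fun p => G.Adj p.1 p.2) ⊆ S.offDiag :=
  fun _ hp ↦ by
    simp only [mem_filter, mem_product] at hp
    exact mem_offDiag.2 ⟨hp.1.1, hp.1.2, hp.2.ne⟩

lemma filter_adj_eq_offDiag_iff :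
    ((S ×ˢ S).filter fun p => G.Adj p.1 p.2) = S.offDiag ↔ (S : Set V).Pairwise G.Adj := by
  refine ⟨fun h a ha b hb hab ↦ ?_, fun h ↦ (filter_adj_subset_offDiag G).antisymm fun p hp ↦ ?_⟩
  · have hmem : (a, b) ∈ S.offDiag := mem_offDiag.2 ⟨ha, hb, hab⟩
    rw [← h] at hmem
    exact (mem_filter.1 hmem).2
  · obtain ⟨hp₁, hp₂, hne⟩ := mem_offDiag.1 hp
    exact mem_filter.2 ⟨mem_product.2 ⟨hp₁, hp₂⟩, h hp₁ hp₂ hne⟩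

variable [Fintype V] [DecidableEq V]

lemma udens_le (hS : S.Nonempty) : udens G S ≤ ((#S : ℝ) - 1) / 2 := by
  rw [udens, ← card_offDiag_div_two_mul_card hS]
  gcongr
  exact filter_adj_subset_offDiag G

lemma udens_eq_iff_pairwise_adj (hS : S.Nonempty) :
    udens G S = ((#S : ℝ) - 1) / 2 ↔ (S : Set V).Pairwise G.Adj := by
  have hpos : (0 : ℝ) < 2 * #S := by positivity
  rw [udens, ← card_offDiag_div_two_mul_card hS, div_left_inj' hpos.ne', Nat.cast_inj,
    ← filter_adj_eq_offDiag_iff G]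
  exact ⟨fun h ↦ eq_of_subset_of_card_le (filter_adj_subset_offDiag G) h.ge, congrArg card⟩

end Density

/-- an unweighted graph has an induced subgraph on at most k
vertices of density at least (k−1)/2 iff it contains a k-clique. -/
theorem stmt17 {V : Type*} [Fintype V] [DecidableEq V] (G : SimpleGraph V)
    [DecidableRel G.Adj] (k : ℕ) (hk : 1 ≤ k) :
    (∃ S : Finset V, S.Nonempty ∧ S.card ≤ k ∧ ((k : ℝ) - 1) / 2 ≤ udens G S) ↔
    ∃ S : Finset V, S.card = k ∧ (S : Set V).Pairwise G.Adj := by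
  constructor
  · rintro ⟨S, hS, hle, hdens⟩
    have hupper := udens_le G hS
    have hge : k ≤ #S := by exact_mod_cast (show (k : ℝ) ≤ #S by linarith)
    have hSk : #S = k := hle.antisymm hge
    refine ⟨S, hSk, (udens_eq_iff_pairwise_adj G hS).1 (hupper.antisymm ?_)⟩
    rwa [hSk]
  · rintro ⟨S, hSk, hclique⟩
    have hS : S.Nonempty := card_pos.1 (hSk ▸ hk)
    refine ⟨S, hS, hSk.le, ?_⟩
    rw [(udens_eq_iff_pairwise_adj G hS).2 hclique, hSk]
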